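/- Let α_1 < ... < α_n be reals, n ≥ 2, and let i* be the unique index such that α_{i*} ≤ (α_1 + α_n)/2 < α_{i*+1} (with i* < n). Then the bipartition S = {v_1,...,v_{i*}}, S̄ = {v_{i*+1},...,v_n} minimizes max{range(S), range(S̄)} over all bipartitions of V into two nonempty sets. -/

import Mathlib

open Finset

noncomputable def rng {n : ℕ} (α : Fin n → ℝ) (S : Finset (Fin n)) : ℝ :=
  if h : S.Nonempty then S.sup' h α - S.inf' h α else 0

/-!
Let `f` and `l` be the first and last vertices and `S = {k ≤ i}`, so that `range(S) ≤ α i - α f`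
and `range(S̄) ≤ α l - α (i+1)`; the choice of `i` bounds both numbers by `α (i+1) - α f` and by
`α l - α i`. By symmetry the part `T` of a competing bipartition contains `f`. If `T` contains a
vertex `k ≥ i+1`, then `range(T) ≥ α (i+1) - α f`. Otherwise `l ∉ T`, and if `T̄` contains a
vertex `k ≤ i` then `range(T̄) ≥ α l - α i`. In the remaining case `T = S`.
-/

section Range

variable {n : ℕ} {α : Fin n → ℝ}

lemma sub_le_rng (α : Fin n → ℝ) {T : Finset (Fin n)} {a b : Fin n} (ha : a ∈ T) (hb : b ∈ T) :
    α a - α b ≤ rng α T := by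
  rw [rng, dif_pos ⟨a, ha⟩]
  exact sub_le_sub (le_sup' α ha) (inf'_le α hb)

lemma rng_le_sub {T : Finset (Fin n)} (hT : T.Nonempty) {lo hi : ℝ}
    (hlo : ∀ k ∈ T, lo ≤ α k) (hhi : ∀ k ∈ T, α k ≤ hi) : rng α T ≤ hi - lo := by
  rw [rng, dif_pos hT]
  exact sub_le_sub (sup'_le hT α hhi) (le_inf' hT α hlo)

lemma rng_Iic_le (hα : Monotone α) {f : Fin n} (hf : IsBot f) (i : Fin n) :
    rng α (Iic i) ≤ α i - α f :=
  rng_le_sub nonempty_Iic (fun k _ => hα (hf k)) (fun _ hk => hα (mem_Iic.mp hk))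

lemma rng_Ioi_le (hα : Monotone α) {l i j : Fin n} (hl : IsTop l) (hij : i ⋖ j) :
    rng α (Ioi i) ≤ α l - α j :=
  rng_le_sub ⟨j, mem_Ioi.mpr hij.lt⟩ (fun _ hk => hα (hij.ge_of_gt (mem_Ioi.mp hk)))
    (fun k _ => hα (hl k))

end Range

section Split

variable {n : ℕ} {α : Fin n → ℝ} {f l i j : Fin n}

lemma max_sub_le_max_rng_of_mem (hα : Monotone α) (hl : IsTop l) (hij : i ⋖ j)
    (hi : 2 * α i ≤ α f + α l) (hj : α f + α l ≤ 2 * α j) {T : Finset (Fin n)} (hfT : f ∈ T) :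
    max (α i - α f) (α l - α j) ≤ max (rng α T) (rng α Tᶜ) := by
  have hαij : α i ≤ α j := hα hij.le
  by_cases hjT : ∃ k ∈ T, j ≤ k
  · obtain ⟨k, hkT, hjk⟩ := hjT
    have : α k - α f ≤ rng α T := sub_le_rng α hkT hfT
    have := hα hjk
    exact le_max_of_le_left (max_le (by linarith) (by linarith))
  push Not at hjT
  have hlT : l ∈ Tᶜ := mem_compl.mpr fun h => (hjT l h).not_ge (hl j)
  by_cases hiT : ∃ k ∈ Tᶜ, k ≤ i
  · obtain ⟨k, hkT, hki⟩ := hiT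
    have : α l - α k ≤ rng α Tᶜ := sub_le_rng α hlT hkT
    have := hα hki
    exact le_max_of_le_right (max_le (by linarith) (by linarith))
  push Not at hiT
  have hiT' : i ∈ T := by simpa using mt (hiT i) (lt_irrefl i)
  have hjT' : j ∈ Tᶜ := mem_compl.mpr fun h => lt_irrefl j (hjT j h)
  exact max_le_max (sub_le_rng α hiT' hfT) (sub_le_rng α hlT hjT')

lemma max_sub_le_max_rng (hα : Monotone α) (hl : IsTop l) (hij : i ⋖ j)
    (hi : 2 * α i ≤ α f + α l) (hj : α f + α l ≤ 2 * α j) (T : Finset (Fin n)) :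
    max (α i - α f) (α l - α j) ≤ max (rng α T) (rng α Tᶜ) := by
  by_cases hfT : f ∈ T
  · exact max_sub_le_max_rng_of_mem hα hl hij hi hj hfT
  · simpa [max_comm (rng α T)] using
      max_sub_le_max_rng_of_mem hα hl hij hi hj (mem_compl.mpr hfT)

end Split

/-- If `i*` is the index with `α_{i*} ≤ (α₁+αₙ)/2 < α_{i*+1}` (0-based `i` here),
then the prefix split at `i*` minimizes `max{range(S), range(S̄)}` over bipartitions. -/
theorem stmt5 (n : ℕ) (α : Fin n → ℝ) (hα : StrictMono α)
    (i : ℕ) (hi : i + 1 < n)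
    (hle : α ⟨i, by omega⟩ ≤ (α ⟨0, by omega⟩ + α ⟨n - 1, by omega⟩) / 2)
    (hlt : (α ⟨0, by omega⟩ + α ⟨n - 1, by omega⟩) / 2 < α ⟨i + 1, hi⟩) :
    ∀ T : Finset (Fin n), T.Nonempty → Tᶜ.Nonempty →
      max (rng α (univ.filter (fun v : Fin n => v.val ≤ i)))
          (rng α (univ.filter (fun v : Fin n => v.val ≤ i))ᶜ) ≤
        max (rng α T) (rng α Tᶜ) := by
  intro T _ _
  set f : Fin n := ⟨0, by omega⟩
  set l : Fin n := ⟨n - 1, by omega⟩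
  set vi : Fin n := ⟨i, by omega⟩
  set vj : Fin n := ⟨i + 1, hi⟩
  have hf : IsBot f := fun k => Fin.mk_le_of_le_val (Nat.zero_le _)
  have hl : IsTop l := fun k => Fin.le_def.mpr (by simp only [l]; omega)
  have hij : vi ⋖ vj := by simp [Fin.covBy_iff, vi, vj]
  have hS : univ.filter (fun v : Fin n => v.val ≤ i) = Iic vi := by ext; simp [vi, Fin.le_def]
  have hSc : (Iic vi)ᶜ = Ioi vi := by ext; simp
  rw [hS, hSc]
  calc max (rng α (Iic vi)) (rng α (Ioi vi))
      ≤ max (α vi - α f) (α l - α vj) :=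
        max_le_max (rng_Iic_le hα.monotone hf vi) (rng_Ioi_le hα.monotone hl hij)
    _ ≤ max (rng α T) (rng α Tᶜ) :=
        max_sub_le_max_rng hα.monotone hl hij (by linarith) (by linarith) T
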